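/- For every n, the polynomial p_n(q) = Σ_{π plane partition of n} q^{w_+(π) − w_−(π)} (a Laurent polynomial in q) is symmetric under q ↦ q^{−1}, i.e. p_n(q) = p_n(q^{−1}). -/

import Mathlib

/-- A plane partition: a finitely supported array of naturals,
weakly decreasing in both directions. -/
structure PlanePartition where
  toFun : ℕ → ℕ → ℕ
  finite_supp : {p : ℕ × ℕ | toFun p.1 p.2 ≠ 0}.Finite
  dec_right : ∀ i j, toFun i (j + 1) ≤ toFun i j
  dec_down : ∀ i j, toFun (i + 1) j ≤ toFun i j

/-- The size `|π| = Σ_{i,j} π_{i,j}`. -/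
noncomputable def PlanePartition.size (π : PlanePartition) : ℕ :=
  ∑ᶠ p : ℕ × ℕ, π.toFun p.1 p.2

/-- `w₊(π) = Σ_{i<j} π_{i,j}`. -/
noncomputable def PlanePartition.wplus (π : PlanePartition) : ℕ :=
  ∑ᶠ p : ℕ × ℕ, if p.1 < p.2 then π.toFun p.1 p.2 else 0

/-- `w₋(π) = Σ_{i>j} π_{i,j}`. -/
noncomputable def PlanePartition.wminus (π : PlanePartition) : ℕ :=
  ∑ᶠ p : ℕ × ℕ, if p.2 < p.1 then π.toFun p.1 p.2 else 0

/-- `w₀(π) = Σ_i π_{i,i}`. -/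
noncomputable def PlanePartition.w0 (π : PlanePartition) : ℕ :=
  ∑ᶠ i : ℕ, π.toFun i i

/-!
Transposing a plane partition preserves its size and exchanges the entries above and below the
diagonal, so it swaps `w₊` and `w₋`. Reindexing `p_n` by this involution turns each
`q ^ (w₊ - w₋)` into `q ^ (w₋ - w₊) = q⁻¹ ^ (w₊ - w₋)`.
-/

namespace PlanePartition

def transpose (π : PlanePartition) : PlanePartition where
  toFun i j := π.toFun j i
  finite_supp := (π.finite_supp.image Prod.swap).subset fun p hp => ⟨p.swap, hp, p.swap_swap⟩
  dec_right i j := π.dec_down j i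
  dec_down i j := π.dec_right j i

theorem transpose_involutive : Function.Involutive transpose := fun _ => rfl

theorem size_transpose (π : PlanePartition) : π.transpose.size = π.size :=
  finsum_comp_equiv (Equiv.prodComm ℕ ℕ) (f := fun p => π.toFun p.1 p.2)

theorem wplus_transpose (π : PlanePartition) : π.transpose.wplus = π.wminus :=
  finsum_comp_equiv (Equiv.prodComm ℕ ℕ)
    (f := fun p => if p.2 < p.1 then π.toFun p.1 p.2 else 0)

theorem wminus_transpose (π : PlanePartition) : π.transpose.wminus = π.wplus :=
  finsum_comp_equiv (Equiv.prodComm ℕ ℕ)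
    (f := fun p => if p.1 < p.2 then π.toFun p.1 p.2 else 0)

end PlanePartition

open PlanePartition in
theorem pn_symmetric_general (n : ℕ) (S : Finset PlanePartition)
    (hS : ∀ π : PlanePartition, π ∈ S ↔ π.size = n) (q : ℚ) :
    ∑ π ∈ S, q ^ ((π.wplus : ℤ) - (π.wminus : ℤ)) =
      ∑ π ∈ S, q⁻¹ ^ ((π.wplus : ℤ) - (π.wminus : ℤ)) := by
  simp_rw [inv_zpow, ← zpow_neg, neg_sub]
  exact Finset.sum_equiv transpose_involutive.toPerm (by simp [hS, size_transpose])
    (by simp [wplus_transpose, wminus_transpose])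

/-- The generating Laurent polynomial `p_n(q) = Σ_{|π| = n} q^{w₊(π) - w₋(π)}`
is symmetric under `q ↦ q⁻¹`. -/
theorem pn_symmetric (n : ℕ) (S : Finset PlanePartition)
    (hS : ∀ π : PlanePartition, π ∈ S ↔ π.size = n) (q : ℚ) (hq : q ≠ 0) :
    ∑ π ∈ S, q ^ ((π.wplus : ℤ) - (π.wminus : ℤ)) =
      ∑ π ∈ S, q⁻¹ ^ ((π.wplus : ℤ) - (π.wminus : ℤ)) :=
  pn_symmetric_general n S hS q
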